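/- Multiplication by B is self-adjoint for the ı-form: ⟨B·u₁, u₂⟩ⁱ = ⟨u₁, B·u₂⟩ⁱ for all u₁, u₂ ∈ Uⁱ. -/

import Mathlib

/-!
Setting: `K = ℚ(q)` is the field of rational functions over `ℚ`; `U⁻ = ℚ(q)[F]` and
`Uⁱ = ℚ(q)[B]` are both realized as `Polynomial K`, with `F` resp. `B` the variable
`Polynomial.X`.
-/

noncomputable section

abbrev K : Type := RatFunc ℚ

/-- The variable `q` of `ℚ(q)`. -/
def q : K := RatFunc.X

/-- The quantum integer `[n] = (qⁿ - q⁻ⁿ)/(q - q⁻¹)`. -/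
def qint (n : ℕ) : K := (q ^ n - q⁻¹ ^ n) / (q - q⁻¹)

/-- The quantum factorial `[n]! = [1][2]⋯[n]`, `[0]! = 1`. -/
def qfact : ℕ → K
  | 0 => 1
  | n + 1 => qfact n * qint (n + 1)

/-- The divided power `F⁽ⁿ⁾ = Fⁿ/[n]!` in `U⁻ = ℚ(q)[F]`. -/
def Fdiv (n : ℕ) : Polynomial K := Polynomial.C (qfact n)⁻¹ * Polynomial.X ^ n

/-- The value of `R` on the monomial `Fⁿ = [n]!·F⁽ⁿ⁾`: for `n ≥ 1` it is
`[n]!·(q^{n-1}/(1-q⁻²))·F⁽ⁿ⁻¹⁾`, which corresponds to `R(F⁽ⁿ⁾) = (q^{n-1}/(1-q⁻²))·F⁽ⁿ⁻¹⁾`,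
and `R(1) = 0`. -/
def Rval : ℕ → Polynomial K
  | 0 => 0
  | n + 1 => (qfact (n + 1) * (q ^ n / (1 - q⁻¹ ^ 2))) • Fdiv n

/-- `R : U⁻ → U⁻`, the unique `ℚ(q)`-linear map with `R(1) = 0` and
`R(F⁽ⁿ⁾) = (q^{n-1}/(1-q⁻²))·F⁽ⁿ⁻¹⁾` for `n ≥ 1`; it is defined by linear extension of
`Rval` from the basis of monomials `Fⁿ`. -/
def Rmap : Polynomial K →ₗ[K] Polynomial K :=
  (Polynomial.basisMonomials K).constr K Rval

/-- `j(Bⁿ)`, defined recursively via `j(1) = 1`, `j(B·u) = F·j(u) + R(j(u))`. -/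
def jval : ℕ → Polynomial K
  | 0 => 1
  | n + 1 => Polynomial.X * jval n + Rmap (jval n)

/-- `j : Uⁱ → U⁻`, the unique `ℚ(q)`-linear map with `j(1) = 1` and
`j(B·u) = F·j(u) + R(j(u))` for all `u ∈ Uⁱ`; it is defined by linear extension of `jval`
from the basis of monomials `Bⁿ`. -/
def jmap : Polynomial K →ₗ[K] Polynomial K :=
  (Polynomial.basisMonomials K).constr K jval

/-- `∏_{k=1}^{n} (1 - q^{-2k})`. -/
def lusztigDenom (n : ℕ) : K := ∏ k ∈ Finset.range n, (1 - q⁻¹ ^ (2 * (k + 1)))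

/-- Lusztig's form `(·,·)⁻` on `U⁻`: the symmetric `ℚ(q)`-bilinear form determined by
`(F⁽ᵐ⁾, F⁽ⁿ⁾)⁻ = δ_{m,n}/((1-q⁻²)(1-q⁻⁴)⋯(1-q⁻²ⁿ))`, i.e. on monomials
`(Fᵐ, Fⁿ)⁻ = δ_{m,n}·[n]!²/((1-q⁻²)⋯(1-q⁻²ⁿ))`, extended bilinearly via coefficients. -/
def formMinus (p r : Polynomial K) : K :=
  p.sum fun n a => a * r.coeff n * (qfact n ^ 2 / lusztigDenom n)

/-- The ı-form on `Uⁱ`: `⟨u₁, u₂⟩ⁱ := (j(u₁), j(u₂))⁻`. -/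
def iform (u₁ u₂ : Polynomial K) : K := formMinus (jmap u₁) (jmap u₂)

lemma q_ne_zero : q ≠ 0 := RatFunc.X_ne_zero

lemma q_pow_ne_one {k : ℕ} (hk : k ≠ 0) : q ^ k ≠ 1 := by
  intro h
  have : (Polynomial.X : Polynomial ℚ) ^ k = 1 := by
    apply RatFunc.algebraMap_injective ℚ
    rw [map_pow, RatFunc.algebraMap_X, map_one]
    exact h
  have := congrArg Polynomial.natDegree this
  simp [Polynomial.natDegree_X_pow] at this
  exact hk this

lemma q_sub_inv_ne : q - q⁻¹ ≠ 0 := by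
  intro h
  have h1 := sub_eq_zero.mp h
  have h2 : q ^ 2 = 1 := by
    rw [pow_two]; nth_rewrite 2 [h1]; exact mul_inv_cancel₀ q_ne_zero
  exact q_pow_ne_one (k := 2) (by norm_num) h2

lemma one_sub_qinv_pow_ne {k : ℕ} (hk : k ≠ 0) : 1 - q⁻¹ ^ k ≠ 0 := by
  intro h
  have h1 : q⁻¹ ^ k = 1 := by linear_combination -h
  have h2 : (q ^ k)⁻¹ = 1 := by rw [← inv_pow]; exact h1
  exact q_pow_ne_one hk (inv_eq_one.mp h2)

lemma qint_ne_zero {n : ℕ} (hn : n ≠ 0) : qint n ≠ 0 := by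
  rw [qint, div_ne_zero_iff]
  refine ⟨?_, q_sub_inv_ne⟩
  intro h
  have h1 : q ^ n = q⁻¹ ^ n := sub_eq_zero.mp h
  have : q ^ (2 * n) = 1 := by
    rw [two_mul, pow_add]; nth_rewrite 2 [h1]
    rw [← mul_pow, mul_inv_cancel₀ q_ne_zero, one_pow]
  exact q_pow_ne_one (by omega) this

lemma qfact_ne_zero (n : ℕ) : qfact n ≠ 0 := by
  induction n with
  | zero => simp [qfact]
  | succ n ih => exact mul_ne_zero ih (qint_ne_zero n.succ_ne_zero)

lemma lusztigDenom_ne_zero (n : ℕ) : lusztigDenom n ≠ 0 := by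
  rw [lusztigDenom]
  exact Finset.prod_ne_zero_iff.mpr fun k _ => one_sub_qinv_pow_ne (by omega)

/-- the scalar by which `Rmap` acts on `X^(n+1)` -/
def rho (n : ℕ) : K := qfact (n + 1) * (q ^ n / (1 - q⁻¹ ^ 2)) * (qfact n)⁻¹

lemma sub1 (n : ℕ) : qint (n + 1) * (1 - q⁻¹ ^ 2) = q ^ n * (1 - q⁻¹ ^ (2 * (n + 1))) := by
  have hq := q_ne_zero
  rw [qint, div_mul_eq_mul_div, div_eq_iff q_sub_inv_ne]
  simp only [inv_pow]
  field_simp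
  ring

lemma key_id (n : ℕ) :
    qfact (n + 1) ^ 2 / lusztigDenom (n + 1) = rho n * (qfact n ^ 2 / lusztigDenom n) := by
  have h2 : (1 : K) - q⁻¹ ^ 2 ≠ 0 := one_sub_qinv_pow_ne (by norm_num)
  have hfn := qfact_ne_zero n
  have hl := lusztigDenom_ne_zero n
  have h2n : (1 : K) - q⁻¹ ^ (2 * (n + 1)) ≠ 0 := one_sub_qinv_pow_ne (by omega)
  have hi := qint_ne_zero (Nat.succ_ne_zero n)
  have hL : lusztigDenom (n + 1) = lusztigDenom n * (1 - q⁻¹ ^ (2 * (n + 1))) := by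
    rw [lusztigDenom, lusztigDenom, Finset.prod_range_succ]
  have hF : qfact (n + 1) = qfact n * qint (n + 1) := rfl
  have hrho : rho n = qint (n + 1) * q ^ n / (1 - q⁻¹ ^ 2) := by
    have e1 : rho n = qint (n + 1) * (q ^ n / (1 - q⁻¹ ^ 2)) * (qfact n * (qfact n)⁻¹) := by
      rw [rho, hF]; ring
    rw [e1, mul_inv_cancel₀ hfn, mul_one, ← mul_div_assoc]
  have hkey : qint (n + 1) ^ 2 / (1 - q⁻¹ ^ (2 * (n + 1))) = qint (n + 1) * q ^ n / (1 - q⁻¹ ^ 2) := by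
    rw [div_eq_div_iff h2n h2]
    linear_combination qint (n + 1) * sub1 n
  rw [hL, hF, hrho, ← hkey]
  field_simp

open Polynomial

lemma Rmap_X_pow (n : ℕ) : Rmap ((X : Polynomial K) ^ n) = Rval n := by
  have h := (Polynomial.basisMonomials K).constr_basis K Rval n
  rw [X_pow_eq_monomial]
  simpa [Polynomial.coe_basisMonomials, Rmap] using h

lemma Rmap_one : Rmap (1 : Polynomial K) = 0 := by
  have := Rmap_X_pow 0
  simpa [Rval] using this

lemma Rmap_X_pow_succ (n : ℕ) :
    Rmap ((X : Polynomial K) ^ (n + 1)) = rho n • (X : Polynomial K) ^ n := by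
  rw [Rmap_X_pow]
  show (qfact (n + 1) * (q ^ n / (1 - q⁻¹ ^ 2))) • Fdiv n = _
  rw [Fdiv, smul_eq_C_mul, smul_eq_C_mul, ← mul_assoc, ← Polynomial.C_mul, rho]

lemma jmap_X_pow (n : ℕ) : jmap ((X : Polynomial K) ^ n) = jval n := by
  have h := (Polynomial.basisMonomials K).constr_basis K jval n
  rw [X_pow_eq_monomial]
  simpa [Polynomial.coe_basisMonomials, jmap] using h

lemma jmap_X_mul (u : Polynomial K) :
    jmap (X * u) = X * jmap u + Rmap (jmap u) := by
  induction u using Polynomial.induction_on' with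
  | add p r hp hr => rw [mul_add, map_add, hp, hr, map_add, map_add]; ring
  | monomial n a =>
    have e1 : (X : Polynomial K) * monomial n a = a • X ^ (n + 1) := by
      rw [← smul_X_eq_monomial, mul_smul_comm, ← pow_succ']
    rw [e1, map_smul, jmap_X_pow, ← smul_X_eq_monomial, map_smul, jmap_X_pow,
      show jval (n + 1) = X * jval n + Rmap (jval n) from rfl, smul_add, map_smul,
      mul_smul_comm]

lemma formMinus_X_pow_left (m : ℕ) (r : Polynomial K) :
    formMinus ((X : Polynomial K) ^ m) r = r.coeff m * (qfact m ^ 2 / lusztigDenom m) := by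
  rw [formMinus, X_pow_eq_monomial, Polynomial.sum_monomial_index _ _ (by simp), one_mul]

lemma formMinus_X_pow_X_pow (m n : ℕ) :
    formMinus ((X : Polynomial K) ^ m) ((X : Polynomial K) ^ n) =
      if m = n then qfact m ^ 2 / lusztigDenom m else 0 := by
  rw [formMinus_X_pow_left, Polynomial.coeff_X_pow]
  split <;> simp

lemma formMinus_add_left (p p' r : Polynomial K) :
    formMinus (p + p') r = formMinus p r + formMinus p' r :=
  Polynomial.sum_add_index _ _ _ (by intro i; ring) (by intro a b c; ring)

lemma formMinus_smul_left (a : K) (p r : Polynomial K) :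
    formMinus (a • p) r = a * formMinus p r := by
  rw [formMinus, Polynomial.sum_smul_index _ _ _ (by intro i; ring), formMinus,
    Polynomial.sum_def, Polynomial.sum_def, Finset.mul_sum]
  exact Finset.sum_congr rfl (by intro n _; ring)

lemma formMinus_add_right (p r r' : Polynomial K) :
    formMinus p (r + r') = formMinus p r + formMinus p r' := by
  rw [formMinus, formMinus, formMinus, Polynomial.sum_def, Polynomial.sum_def,
    Polynomial.sum_def, ← Finset.sum_add_distrib]
  exact Finset.sum_congr rfl (by intro n _; rw [Polynomial.coeff_add]; ring)

lemma formMinus_smul_right (a : K) (p r : Polynomial K) :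
    formMinus p (a • r) = a * formMinus p r := by
  rw [formMinus, formMinus, Polynomial.sum_def, Polynomial.sum_def, Finset.mul_sum]
  refine Finset.sum_congr rfl (by intro n _; rw [Polynomial.coeff_smul, smul_eq_mul]; ring)

lemma Rmap_X_zero : Rmap ((X : Polynomial K) ^ 0) = 0 := by
  rw [pow_zero]; exact Rmap_one

lemma adj_mono_mono (m n : ℕ) :
    formMinus (X * X ^ m + Rmap ((X : Polynomial K) ^ m)) ((X : Polynomial K) ^ n) =
      formMinus ((X : Polynomial K) ^ m) (X * X ^ n + Rmap ((X : Polynomial K) ^ n)) := by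
  have hX : ∀ k : ℕ, (X : Polynomial K) * X ^ k = X ^ (k + 1) := fun k => by ring
  cases m with
  | zero =>
    cases n with
    | zero =>
      rw [hX 0, Rmap_X_zero, add_zero, formMinus_X_pow_X_pow, formMinus_X_pow_X_pow,
        if_neg (by omega), if_neg (by omega)]
    | succ k =>
      rw [hX 0, hX (k + 1), Rmap_X_zero, add_zero, Rmap_X_pow_succ,
        formMinus_add_right, formMinus_smul_right, formMinus_X_pow_X_pow,
        formMinus_X_pow_X_pow, formMinus_X_pow_X_pow]
      by_cases h : k = 0
      · subst h
        rw [if_pos rfl, if_neg (by omega), if_pos rfl]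
        linear_combination key_id 0
      · rw [if_neg (by omega), if_neg (by omega), if_neg (by omega)]; ring
  | succ j =>
    cases n with
    | zero =>
      rw [hX (j + 1), hX 0, Rmap_X_zero, add_zero, Rmap_X_pow_succ,
        formMinus_add_left, formMinus_smul_left, formMinus_X_pow_X_pow,
        formMinus_X_pow_X_pow, formMinus_X_pow_X_pow]
      by_cases h : j = 0
      · subst h
        rw [if_neg (by omega), if_pos rfl, if_pos rfl]
        linear_combination -key_id 0
      · rw [if_neg (by omega), if_neg (by omega), if_neg (by omega)]; ring
    | succ k =>
      rw [hX (j + 1), hX (k + 1), Rmap_X_pow_succ, Rmap_X_pow_succ,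
        formMinus_add_left, formMinus_smul_left, formMinus_add_right, formMinus_smul_right,
        formMinus_X_pow_X_pow, formMinus_X_pow_X_pow, formMinus_X_pow_X_pow,
        formMinus_X_pow_X_pow]
      by_cases h1 : k = j + 1
      · subst h1
        rw [if_pos rfl, if_neg (by omega), if_neg (by omega), if_pos rfl]
        linear_combination key_id (j + 1)
      · by_cases h2 : j = k + 1
        · subst h2
          rw [if_neg (by omega), if_pos rfl, if_pos rfl, if_neg (by omega)]
          linear_combination -key_id (k + 1)
        · rw [if_neg (by omega), if_neg (by omega), if_neg (by omega), if_neg (by omega)]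
          ring
lemma adj_mono (m : ℕ) (r : Polynomial K) :
    formMinus (X * X ^ m + Rmap ((X : Polynomial K) ^ m)) r =
      formMinus ((X : Polynomial K) ^ m) (X * r + Rmap r) := by
  induction r using Polynomial.induction_on' with
  | add rr ss hr hs =>
    rw [mul_add, map_add, show X * rr + X * ss + (Rmap rr + Rmap ss)
        = (X * rr + Rmap rr) + (X * ss + Rmap ss) by ring,
      formMinus_add_right, hr, hs, ← formMinus_add_right]
  | monomial n a =>
    rw [← smul_X_eq_monomial, formMinus_smul_right, adj_mono_mono, map_smul, mul_smul_comm,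
      ← smul_add, formMinus_smul_right]

lemma adj (p r : Polynomial K) :
    formMinus (X * p + Rmap p) r = formMinus p (X * r + Rmap r) := by
  induction p using Polynomial.induction_on' with
  | add pp ss hp hs =>
    rw [mul_add, map_add, show X * pp + X * ss + (Rmap pp + Rmap ss)
        = (X * pp + Rmap pp) + (X * ss + Rmap ss) by ring,
      formMinus_add_left, hp, hs, ← formMinus_add_left]
  | monomial n a =>
    rw [← smul_X_eq_monomial, map_smul, mul_smul_comm, ← smul_add, formMinus_smul_left,
      formMinus_smul_left, adj_mono]

/-- multiplication by `B` is self-adjoint for the ı-form: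
`⟨B·u₁, u₂⟩ⁱ = ⟨u₁, B·u₂⟩ⁱ` for all `u₁, u₂ ∈ Uⁱ`. -/
theorem stmt4 (u₁ u₂ : Polynomial K) :
    iform (Polynomial.X * u₁) u₂ = iform u₁ (Polynomial.X * u₂) := by
  rw [iform, iform, jmap_X_mul, jmap_X_mul]
  exact adj (jmap u₁) (jmap u₂)


end
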